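/- arXiv:2212.06891 — 2 statements merged into one kernel-verified Lean document; each statement's English description precedes it below -/
import Mathlib

section
/- Let γ ≥ 1 and let (n_{t,i})_{t≥1, 1≤i≤d} be nonnegative integers with n_{1,i} = 0 and n_{t+1,i} = n_{t,i} + 1 if i ∈ S_t, n_{t+1,i} = n_{t,i} otherwise, where S_t ⊆ {1,…,d}. Define w_t^2 = ∑_{i∈S_t} 1/(n_{t,i} + γ). Then for all T, ∑_{t=1}^T w_t^2 ≤ 2 d · log(1 + T/γ). -/
/-!
Each coordinate is handled separately. While its count is `m`, a selection of the coordinate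
costs `1 / (m + γ)`, and since `m + γ ≥ 1` this is at most `2 (log (m + 1 + γ) - log (m + γ))`.
Summing over the rounds telescopes to `2 log (1 + n_{T+1,i} / γ)`, and `n_{T+1,i} ≤ T`.
-/

open Finset Real

lemma one_div_le_two_mul_log_add_one_sub_log {x : ℝ} (hx : 1 ≤ x) :
    1 / x ≤ 2 * (log (x + 1) - log x) := by
  have hx0 : 0 < x := by linarith
  have hlog : 1 - ((x + 1) / x)⁻¹ ≤ log ((x + 1) / x) :=
    one_sub_inv_le_log_of_pos (by positivity)
  rw [log_div (by linarith) hx0.ne', inv_div] at hlog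
  have hsub : 2 * (1 - x / (x + 1)) = 2 / (x + 1) := by field_simp; ring
  have hhalf : 1 / x ≤ 2 / (x + 1) := by
    rw [div_le_div_iff₀ hx0 (by linarith)]; linarith
  linarith

section Counts

variable {γ : ℝ} {c : ℕ → ℕ} {p : ℕ → Prop} [DecidablePred p]

lemma counts_le_add (hc : ∀ t, 1 ≤ t → c (t + 1) = c t + if p t then 1 else 0) (T : ℕ) :
    c (T + 1) ≤ c 1 + T := by
  induction T with
  | zero => simp
  | succ T ih => rw [hc (T + 1) (by omega)]; split_ifs <;> omega

lemma ite_one_div_le_two_mul_log_sub (hγ : 1 ≤ γ) {t : ℕ}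
    (hct : c (t + 1) = c t + if p t then 1 else 0) :
    (if p t then 1 / ((c t : ℝ) + γ) else 0) ≤
      2 * (log (c (t + 1) + γ) - log (c t + γ)) := by
  rw [hct]
  split_ifs
  · push_cast
    rw [add_right_comm]
    exact one_div_le_two_mul_log_add_one_sub_log (le_add_of_nonneg_of_le (Nat.cast_nonneg _) hγ)
  · simp

lemma sum_ite_one_div_le_two_mul_log_sub (hγ : 1 ≤ γ)
    (hc : ∀ t, 1 ≤ t → c (t + 1) = c t + if p t then 1 else 0) (T : ℕ) :
    ∑ t ∈ Icc 1 T, (if p t then 1 / ((c t : ℝ) + γ) else 0) ≤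
      2 * (log (c (T + 1) + γ) - log (c 1 + γ)) := by
  calc ∑ t ∈ Icc 1 T, (if p t then 1 / ((c t : ℝ) + γ) else 0)
      ≤ ∑ t ∈ Ico 1 (T + 1), 2 * (log (c (t + 1) + γ) - log (c t + γ)) := by
        rw [← Ico_add_one_right_eq_Icc]
        exact sum_le_sum fun t ht ↦ ite_one_div_le_two_mul_log_sub hγ (hc t (mem_Ico.1 ht).1)
    _ = 2 * (log (c (T + 1) + γ) - log (c 1 + γ)) := by
        rw [← mul_sum, sum_Ico_sub (fun t ↦ log ((c t : ℝ) + γ)) (by omega)]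

lemma sum_ite_one_div_le_two_mul_log_one_add (hγ : 1 ≤ γ) (h1 : c 1 = 0)
    (hc : ∀ t, 1 ≤ t → c (t + 1) = c t + if p t then 1 else 0) (T : ℕ) :
    ∑ t ∈ Icc 1 T, (if p t then 1 / ((c t : ℝ) + γ) else 0) ≤ 2 * log (1 + T / γ) := by
  have hγ0 : 0 < γ := by linarith
  have hcT : (c (T + 1) : ℝ) ≤ T := by
    have := counts_le_add hc T
    rw [h1, zero_add] at this
    exact_mod_cast this
  refine (sum_ite_one_div_le_two_mul_log_sub hγ hc T).trans ?_
  rw [h1, Nat.cast_zero, zero_add, ← log_div (by positivity) hγ0.ne']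
  gcongr
  rw [one_add_div hγ0.ne', add_comm]
  gcongr

end Counts

/-- Elliptical-potential bound for a diagonal design: if `n t i` counts the selections of
coordinate `i` before round `t` and `w t ^ 2 = ∑_{i ∈ S t} 1 / (n t i + γ)`, then
`∑_{t=1}^T w t ^ 2 ≤ 2 d log (1 + T / γ)`. -/
theorem stmt5 {d : ℕ} (γ : ℝ) (hγ : 1 ≤ γ) (S : ℕ → Finset (Fin d))
    (n : ℕ → Fin d → ℕ) (h1 : ∀ i, n 1 i = 0)
    (hrec : ∀ t, 1 ≤ t → ∀ i, n (t + 1) i = n t i + if i ∈ S t then 1 else 0)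
    (T : ℕ) :
    ∑ t ∈ Finset.Icc 1 T, (∑ i ∈ S t, (1 : ℝ) / (n t i + γ)) ≤
      2 * d * Real.log (1 + T / γ) := by
  calc ∑ t ∈ Icc 1 T, ∑ i ∈ S t, (1 : ℝ) / (n t i + γ)
      = ∑ i : Fin d, ∑ t ∈ Icc 1 T, (if i ∈ S t then 1 / ((n t i : ℝ) + γ) else 0) := by
        rw [sum_comm]
        exact sum_congr rfl fun t _ ↦ by rw [sum_ite_mem, univ_inter]
    _ ≤ ∑ _i : Fin d, 2 * log (1 + T / γ) := sum_le_sum fun i _ ↦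
        sum_ite_one_div_le_two_mul_log_one_add hγ (h1 i) (fun t ht ↦ hrec t ht i) T
    _ = 2 * d * log (1 + T / γ) := by
        rw [sum_const, card_univ, Fintype.card_fin, nsmul_eq_mul]; ring
end

section
/- The set S = {Θ ∈ R^{N×M} : rank(Θ) ≤ R, ‖Θ‖_F ≤ 1} admits an ε-net (in Frobenius norm) of cardinality at most (9/ε)^{(N+M+1)R} for every ε ∈ (0,1]. -/
/-!
A matrix `Θ` of rank at most `R` factors through `ℝ^R` as `Θ = U * W` with `‖U‖_op ≤ 1` and
`‖W‖_F = ‖Θ‖_F`: take `W = ι ∘ Θ` for an isometric embedding `ι` of the range of `Θ` into `ℝ^R`,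
and `U` the adjoint of `ι`. Since `‖U W - U' W'‖_F ≤ ‖U - U'‖_op ‖W‖_F + ‖U'‖_op ‖W - W'‖_F`, the
products of points of `ε/2`-nets of the operator-norm unit ball (dimension `NR`) and of the
Frobenius unit ball (dimension `RM`) form an `ε`-net. A maximal `δ`-separated subset of a unit
ball is a `δ`-net, and comparing the volumes of the disjoint `δ/2`-balls around its points bounds
its size by `(1 + 2/δ)^dim`; so the net has at most `(1 + 4/ε)^((N+M)R) ≤ (9/ε)^((N+M+1)R)` points.
-/

open Finset

noncomputable def frobNorm {N M : ℕ} (A : Matrix (Fin N) (Fin M) ℝ) : ℝ :=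
  Real.sqrt (∑ u, ∑ i, (A u i) ^ 2)

open Metric MeasureTheory Module
-- `‖A‖` is the Frobenius norm of a matrix `A`; its ℓ²-operator norm is `‖toEuclideanOp A‖`.
open scoped ENNReal Matrix.Norms.Frobenius

theorem card_le_of_pairwise_lt_dist {E : Type*} [NormedAddCommGroup E] [NormedSpace ℝ E]
    [FiniteDimensional ℝ E] {δ : ℝ} (hδ : 0 < δ) {t : Finset E}
    (ht : (t : Set E) ⊆ closedBall 0 1) (hsep : (t : Set E).Pairwise (δ < dist · ·)) :
    (t.card : ℝ) ≤ (1 + 2 / δ) ^ finrank ℝ E := by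
  borelize E
  set μ : Measure E := Measure.addHaar
  have hdisj : (t : Set E).PairwiseDisjoint (closedBall · (δ / 2)) := fun x hx y hy hxy =>
    closedBall_disjoint_closedBall (by linarith [hsep hx hy hxy])
  have hvol : (t.card : ℝ≥0∞) * μ (closedBall 0 (δ / 2)) ≤ μ (closedBall 0 (1 + δ / 2)) :=
    calc (t.card : ℝ≥0∞) * μ (closedBall 0 (δ / 2))
      _ = ∑ x ∈ t, μ (closedBall x (δ / 2)) := by simp [Measure.addHaar_closedBall_center]
      _ = μ (⋃ x ∈ t, closedBall x (δ / 2)) :=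
          (measure_biUnion_finset hdisj fun _ _ => measurableSet_closedBall).symm
      _ ≤ μ (closedBall 0 (1 + δ / 2)) := measure_mono <| Set.iUnion₂_subset fun x hx =>
          closedBall_subset_closedBall'
            (by linarith [mem_closedBall_zero_iff.mp (ht hx), dist_zero_right x])
  rw [Measure.addHaar_closedBall' μ 0 (by positivity : 0 ≤ δ / 2),
    Measure.addHaar_closedBall' μ 0 (by positivity : 0 ≤ 1 + δ / 2), ← mul_assoc,
    ENNReal.mul_le_mul_iff_left (measure_closedBall_pos μ 0 one_pos).ne'
      measure_closedBall_lt_top.ne, ← ENNReal.ofReal_natCast,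
    ← ENNReal.ofReal_mul (by positivity), ENNReal.ofReal_le_ofReal_iff (by positivity),
    ← le_div_iff₀ (by positivity), ← div_pow] at hvol
  rwa [show (1 + δ / 2) / (δ / 2) = 1 + 2 / δ by field_simp; ring] at hvol

theorem exists_finset_subset_forall_exists_dist_le {X : Type*} [PseudoMetricSpace X]
    {s : Set X} {δ : ℝ} (hδ : 0 ≤ δ) {n : ℕ}
    (h : ∀ t : Finset X, ↑t ⊆ s → (t : Set X).Pairwise (δ < dist · ·) → t.card ≤ n) :
    ∃ t : Finset X, ↑t ⊆ s ∧ t.card ≤ n ∧ ∀ x ∈ s, ∃ y ∈ t, dist x y ≤ δ := by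
  classical
  by_contra! hfar
  suffices ∀ k ≤ n + 1, ∃ t : Finset X, ↑t ⊆ s ∧ (t : Set X).Pairwise (δ < dist · ·) ∧
      t.card = k by
    obtain ⟨t, hts, htsep, htcard⟩ := this (n + 1) le_rfl
    have := h t hts htsep
    omega
  intro k hk
  induction k with
  | zero => exact ⟨∅, by simp, by simp, rfl⟩
  | succ k ih =>
    obtain ⟨t, hts, htsep, rfl⟩ := ih (by omega)
    obtain ⟨x, hxs, hx⟩ := hfar t hts (h t hts htsep)
    have hxt : x ∉ t := fun hxt => by linarith [hx x hxt, dist_self x]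
    refine ⟨insert x t, ?_, ?_, card_insert_of_notMem hxt⟩
    · simpa [Set.insert_subset_iff] using ⟨hxs, hts⟩
    · rw [coe_insert]
      exact htsep.insert fun y hy _ => ⟨hx y hy, dist_comm x y ▸ hx y hy⟩

theorem exists_finset_subset_closedBall_forall_exists_dist_le {E : Type*}
    [NormedAddCommGroup E] [NormedSpace ℝ E] [FiniteDimensional ℝ E] {δ : ℝ} (hδ : 0 < δ) :
    ∃ t : Finset E, ↑t ⊆ closedBall (0 : E) 1 ∧
      (t.card : ℝ) ≤ (1 + 2 / δ) ^ finrank ℝ E ∧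
      ∀ x ∈ closedBall (0 : E) 1, ∃ y ∈ t, dist x y ≤ δ := by
  obtain ⟨t, hts, htcard, hnet⟩ :=
    exists_finset_subset_forall_exists_dist_le (s := closedBall (0 : E) 1) hδ.le
    fun t hts htsep => Nat.le_floor (card_le_of_pairwise_lt_dist hδ hts htsep)
  exact ⟨t, hts, (Nat.cast_le.mpr htcard).trans (Nat.floor_le (by positivity)), hnet⟩

theorem exists_linearIsometry_of_finrank_le {𝕜 E F : Type*} [RCLike 𝕜] [NormedAddCommGroup E]
    [InnerProductSpace 𝕜 E] [FiniteDimensional 𝕜 E] [NormedAddCommGroup F]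
    [InnerProductSpace 𝕜 F] [FiniteDimensional 𝕜 F] (h : finrank 𝕜 E ≤ finrank 𝕜 F) :
    Nonempty (E →ₗᵢ[𝕜] F) := by
  let bE := (stdOrthonormalBasis 𝕜 E).toBasis
  let v : Fin (finrank 𝕜 E) → F := stdOrthonormalBasis 𝕜 F ∘ Fin.castLE h
  have hv : Orthonormal 𝕜 v :=
    (stdOrthonormalBasis 𝕜 F).orthonormal.comp _ (Fin.castLE_injective h)
  refine ⟨(bE.constr 𝕜 v).isometryOfOrthonormal (v := bE)
    (by simp [bE, (stdOrthonormalBasis 𝕜 E).orthonormal]) ?_⟩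
  convert hv
  ext i
  simp

namespace ContinuousLinearMap

theorem exists_comp_eq_of_finrank_range_le {𝕜 E F G : Type*} [RCLike 𝕜] [NormedAddCommGroup E]
    [InnerProductSpace 𝕜 E] [NormedAddCommGroup F] [InnerProductSpace 𝕜 F] [FiniteDimensional 𝕜 F]
    [NormedAddCommGroup G] [InnerProductSpace 𝕜 G] [FiniteDimensional 𝕜 G] (T : E →L[𝕜] G)
    (h : finrank 𝕜 T.toLinearMap.range ≤ finrank 𝕜 F) :
    ∃ (U : F →L[𝕜] G) (W : E →L[𝕜] F), U ∘L W = T ∧ ‖U‖ ≤ 1 ∧ ∀ x, ‖W x‖ = ‖T x‖ := by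
  set K := T.toLinearMap.range
  have := FiniteDimensional.complete 𝕜 F
  have := FiniteDimensional.complete 𝕜 K
  obtain ⟨ι⟩ := exists_linearIsometry_of_finrank_le h
  set J := ι.toContinuousLinearMap
  have hJ : adjoint J ∘L J = 1 := (isometry_iff_adjoint_comp_self J).mp ι.isometry
  set T' : E →L[𝕜] K := T.codRestrict K T.toLinearMap.mem_range_self
  refine ⟨K.subtypeL ∘L adjoint J, J ∘L T', ?_, ?_, fun x => by simp [J, T']⟩
  · ext1 x
    simpa [T'] using congr(K.subtypeL ($hJ (T' x)))
  · calc ‖K.subtypeL ∘L adjoint J‖ ≤ ‖K.subtypeL‖ * ‖adjoint J‖ := opNorm_comp_le _ _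
      _ ≤ 1 * 1 := by
        gcongr
        · exact Submodule.norm_subtypeL_le K
        · rw [LinearIsometryEquiv.norm_map]; exact ι.norm_toContinuousLinearMap_le
      _ = 1 := one_mul 1

end ContinuousLinearMap

namespace Matrix

variable {l m n : Type*} [Fintype l] [Fintype m] [Fintype n]

theorem frobenius_norm_sq_eq_sum (A : Matrix m n ℝ) :
    ‖A‖ ^ 2 = ∑ i, ∑ j, A i j ^ 2 := by
  rw [frobenius_norm_def, ← Real.sqrt_eq_rpow, Real.sq_sqrt (by positivity)]
  simp

variable [DecidableEq l] [DecidableEq n]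

noncomputable def toEuclideanOp :
    Matrix m n ℝ ≃ₗ[ℝ] (EuclideanSpace ℝ n →L[ℝ] EuclideanSpace ℝ m) :=
  toEuclideanLin.trans LinearMap.toContinuousLinearMap

theorem toEuclideanOp_mul (A : Matrix m n ℝ) (B : Matrix n l ℝ) :
    toEuclideanOp (A * B) = toEuclideanOp A ∘L toEuclideanOp B := by
  ext x i
  simp [toEuclideanOp, mulVec_mulVec]

theorem toEuclideanOp_single (A : Matrix m n ℝ) (j : n) :
    toEuclideanOp A (EuclideanSpace.single j 1) = WithLp.toLp 2 (fun i => A i j) := by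
  ext i
  simp [toEuclideanOp]

theorem frobenius_norm_sq_eq_sum_norm_toEuclideanOp_single (A : Matrix m n ℝ) :
    ‖A‖ ^ 2 = ∑ j, ‖toEuclideanOp A (EuclideanSpace.single j 1)‖ ^ 2 := by
  simp [frobenius_norm_sq_eq_sum, toEuclideanOp_single, EuclideanSpace.norm_sq_eq,
    Finset.sum_comm (γ := m)]

theorem frobenius_norm_mul_le (A : Matrix m n ℝ) (B : Matrix n l ℝ) :
    ‖A * B‖ ≤ ‖toEuclideanOp A‖ * ‖B‖ := by
  refine le_of_sq_le_sq ?_ (by positivity)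
  rw [mul_pow, frobenius_norm_sq_eq_sum_norm_toEuclideanOp_single,
    frobenius_norm_sq_eq_sum_norm_toEuclideanOp_single, Finset.mul_sum]
  gcongr with j
  rw [toEuclideanOp_mul, ← mul_pow]
  exact pow_le_pow_left₀ (norm_nonneg _) ((toEuclideanOp A).le_opNorm _) 2

theorem frobenius_norm_eq_of_norm_toEuclideanOp_apply_eq {m' : Type*} [Fintype m']
    {A : Matrix m n ℝ} {B : Matrix m' n ℝ}
    (h : ∀ x, ‖toEuclideanOp A x‖ = ‖toEuclideanOp B x‖) : ‖A‖ = ‖B‖ := by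
  rw [← sq_eq_sq₀ (norm_nonneg _) (norm_nonneg _),
    frobenius_norm_sq_eq_sum_norm_toEuclideanOp_single,
    frobenius_norm_sq_eq_sum_norm_toEuclideanOp_single]
  simp only [h]

theorem rank_eq_finrank_range_toEuclideanOp (A : Matrix m n ℝ) :
    A.rank = finrank ℝ (toEuclideanOp A).toLinearMap.range :=
  rank_eq_finrank_range_toLin A (EuclideanSpace.basisFun m ℝ).toBasis
    (EuclideanSpace.basisFun n ℝ).toBasis

theorem exists_mul_eq_of_rank_le {ι : Type*} [Fintype ι] [DecidableEq ι] (Θ : Matrix m n ℝ)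
    (h : Θ.rank ≤ Fintype.card ι) :
    ∃ (U : Matrix m ι ℝ) (W : Matrix ι n ℝ),
      Θ = U * W ∧ ‖toEuclideanOp U‖ ≤ 1 ∧ ‖W‖ = ‖Θ‖ := by
  obtain ⟨U, W, hUW, hU, hW⟩ := (toEuclideanOp Θ).exists_comp_eq_of_finrank_range_le
    (F := EuclideanSpace ℝ ι)
    (by rwa [finrank_euclideanSpace, ← rank_eq_finrank_range_toEuclideanOp])
  refine ⟨toEuclideanOp.symm U, toEuclideanOp.symm W, toEuclideanOp.injective ?_, ?_, ?_⟩
  · rw [toEuclideanOp_mul, LinearEquiv.apply_symm_apply, LinearEquiv.apply_symm_apply, hUW]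
  · simpa only [LinearEquiv.apply_symm_apply] using hU
  · refine frobenius_norm_eq_of_norm_toEuclideanOp_apply_eq fun x => ?_
    rw [LinearEquiv.apply_symm_apply, hW]

theorem frobenius_norm_mul_sub_mul_le (U U' : Matrix m n ℝ) (W W' : Matrix n l ℝ) :
    ‖U * W - U' * W'‖ ≤ ‖toEuclideanOp (U - U')‖ * ‖W‖ + ‖toEuclideanOp U'‖ * ‖W - W'‖ :=
  calc ‖U * W - U' * W'‖ = ‖(U - U') * W + U' * (W - W')‖ := by
        rw [Matrix.sub_mul, Matrix.mul_sub, sub_add_sub_cancel]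
    _ ≤ _ := (norm_add_le _ _).trans
        (add_le_add (frobenius_norm_mul_le _ _) (frobenius_norm_mul_le _ _))

theorem exists_finset_forall_rank_le_exists_norm_sub_le (ι : Type*) [Fintype ι]
    [DecidableEq ι] {δ : ℝ} (hδ : 0 < δ) :
    ∃ net : Finset (Matrix m n ℝ),
      (net.card : ℝ) ≤ (1 + 2 / δ) ^ ((Fintype.card m + Fintype.card n) * Fintype.card ι) ∧
      ∀ Θ : Matrix m n ℝ, Θ.rank ≤ Fintype.card ι → ‖Θ‖ ≤ 1 →
        ∃ Θ' ∈ net, ‖Θ - Θ'‖ ≤ 2 * δ := by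
  classical
  obtain ⟨tU, htU, htUcard, hnetU⟩ := exists_finset_subset_closedBall_forall_exists_dist_le
    (E := EuclideanSpace ℝ ι →L[ℝ] EuclideanSpace ℝ m) hδ
  obtain ⟨tW, -, htWcard, hnetW⟩ := exists_finset_subset_closedBall_forall_exists_dist_le
    (E := Matrix ι n ℝ) hδ
  rw [← toEuclideanOp.finrank_eq] at htUcard
  simp only [finrank_matrix, finrank_self, mul_one] at htUcard htWcard
  refine ⟨(tU ×ˢ tW).image fun p => toEuclideanOp.symm p.1 * p.2, ?_, fun Θ hrank hnorm => ?_⟩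
  · calc (((tU ×ˢ tW).image _).card : ℝ) ≤ tU.card * tW.card := by
          exact_mod_cast card_image_le.trans (card_product tU tW).le
      _ ≤ _ := by
          rw [add_mul, pow_add, mul_comm (Fintype.card n)]
          gcongr
  · obtain ⟨U, W, rfl, hU, hW⟩ := Θ.exists_mul_eq_of_rank_le hrank
    obtain ⟨U', hU'mem, hUU'⟩ := hnetU (toEuclideanOp U) (mem_closedBall_zero_iff.2 hU)
    obtain ⟨W', hW'mem, hWW'⟩ := hnetW W (mem_closedBall_zero_iff.2 (hW.trans_le hnorm))
    refine ⟨_, mem_image_of_mem _ (mk_mem_product hU'mem hW'mem), ?_⟩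
    calc _ ≤ ‖toEuclideanOp (U - toEuclideanOp.symm U')‖ * ‖W‖
          + ‖toEuclideanOp (toEuclideanOp.symm U')‖ * ‖W - W'‖ :=
          frobenius_norm_mul_sub_mul_le _ _ _ _
      _ ≤ δ * 1 + 1 * δ := by
          rw [map_sub, LinearEquiv.apply_symm_apply, ← dist_eq_norm, ← dist_eq_norm]
          gcongr
          · exact hW.trans_le hnorm
          · exact mem_closedBall_zero_iff.1 (htU hU'mem)
      _ = 2 * δ := by ring

end Matrix

theorem frobNorm_eq_norm {N M : ℕ} (A : Matrix (Fin N) (Fin M) ℝ) : frobNorm A = ‖A‖ := by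
  rw [frobNorm, ← Matrix.frobenius_norm_sq_eq_sum, Real.sqrt_sq (norm_nonneg _)]

/-- The set of rank-`≤ R` matrices in the unit Frobenius ball admits an `ε`-net of
cardinality at most `(9/ε)^{(N+M+1)R}` for every `ε ∈ (0, 1]`. -/
theorem stmt13 (N M R : ℕ) (ε : ℝ) (hε0 : 0 < ε) (hε1 : ε ≤ 1) :
    ∃ net : Finset (Matrix (Fin N) (Fin M) ℝ),
      (net.card : ℝ) ≤ (9 / ε) ^ ((N + M + 1) * R) ∧
      ∀ Θ : Matrix (Fin N) (Fin M) ℝ, Θ.rank ≤ R → frobNorm Θ ≤ 1 →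
        ∃ Θ' ∈ net, frobNorm (Θ - Θ') ≤ ε := by
  obtain ⟨net, hcard, hnet⟩ := Matrix.exists_finset_forall_rank_le_exists_norm_sub_le
    (m := Fin N) (n := Fin M) (Fin R) (half_pos hε0)
  have hbase : 1 + 2 / (ε / 2) ≤ 9 / ε := by
    rw [show 1 + 2 / (ε / 2) = (ε + 4) / ε by field_simp; ring]
    gcongr
    linarith
  refine ⟨net, hcard.trans ?_, fun Θ hrank hnorm => ?_⟩
  · simp only [Fintype.card_fin]
    calc _ ≤ (1 + 2 / (ε / 2)) ^ ((N + M + 1) * R) :=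
          pow_le_pow_right₀ (le_add_of_nonneg_right (by positivity))
            (Nat.mul_le_mul_right R (Nat.le_succ _))
      _ ≤ _ := by gcongr
  · obtain ⟨Θ', hΘ', hdist⟩ := hnet Θ (by simpa using hrank) (frobNorm_eq_norm Θ ▸ hnorm)
    exact ⟨Θ', hΘ', by rw [frobNorm_eq_norm]; linarith⟩
end
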